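/- arXiv:1502.07685 — 7 statements merged into one kernel-verified Lean document; each statement's English description precedes it below -/
import Mathlib

section
/- Let (X₁, ν₁) and (X₂, ν₂) be σ-finite measure spaces and let p be a probability measure on X₁ × X₂ with strictly positive density ρ with respect to ν₁ ⊗ ν₂. Fix a probability measure q₂ on X₂ absolutely continuous with respect to ν₂, and assume h(x₁) := ∫ log ρ(x₁, x₂) dq₂(x₂) is defined ν₁-a.e. with Z₁ := ∫ e^{h(x₁)} dν₁(x₁) ∈ (0, ∞). Let q₁* be the probability measure on X₁ with density e^{h}/Z₁ with respect to ν₁. Then for every probability measure q₁ on X₁ absolutely continuous with respect to ν₁ for which KL(q₁ ⊗ q₂ ‖ p) and all the integrals below are finite, KL(q₁ ⊗ q₂ ‖ p) ≥ KL(q₁* ⊗ q₂ ‖ p), with equality if and only if q₁ = q₁*. -/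
/-!
With `f₁ = dq₁/dν₁` and `f₂ = dq₂/dν₂`, the log-density of `q₁ ⊗ q₂` with respect to `p` is
`log f₁ x₁ + log f₂ x₂ - log ρ (x₁, x₂)`, so Fubini gives
`KL(q₁ ⊗ q₂ ‖ p) = ∫ (log f₁ - h) dq₁ + ∫ log f₂ dq₂`. Since `q₁*` is the exponential tilt of `ν₁`
by `h`, `log f₁ - h = log (dq₁/dq₁*) - log Z₁`, hence
`KL(q₁ ⊗ q₂ ‖ p) = KL(q₁ ‖ q₁*) + C` with `C` independent of `q₁`. Gibbs' inequality
`KL(q₁ ‖ q₁*) ≥ 0`, with equality iff `q₁ = q₁*`, concludes.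
-/

open MeasureTheory Real
open scoped ENNReal

/-- Kullback–Leibler divergence `KL(q ‖ p) = ∫ log (dq/dp) dq`. -/
noncomputable def KLdiv {α : Type*} [MeasurableSpace α] (q p : Measure α) : ℝ :=
  ∫ x, Real.log ((q.rnDeriv p) x).toReal ∂q

open InformationTheory

section Gibbs

variable {α : Type*} [MeasurableSpace α] {μ ν : Measure α}
  [IsProbabilityMeasure μ] [IsProbabilityMeasure ν]

lemma KLdiv_eq_toReal_klDiv (hμν : μ ≪ ν) : KLdiv μ ν = (klDiv μ ν).toReal :=
  (toReal_klDiv_of_measure_eq hμν (by simp)).symm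

lemma KLdiv_nonneg (hμν : μ ≪ ν) : 0 ≤ KLdiv μ ν :=
  KLdiv_eq_toReal_klDiv hμν ▸ ENNReal.toReal_nonneg

lemma KLdiv_eq_zero_iff (hμν : μ ≪ ν) (h_int : Integrable (llr μ ν) μ) :
    KLdiv μ ν = 0 ↔ μ = ν := by
  rw [KLdiv_eq_toReal_klDiv hμν, ENNReal.toReal_eq_zero_iff, or_iff_left (klDiv_ne_top hμν h_int),
    klDiv_eq_zero_iff]

end Gibbs

lemma rnDeriv_toReal_pos {α : Type*} [MeasurableSpace α] {μ ν : Measure α} [SigmaFinite μ]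
    [μ.HaveLebesgueDecomposition ν] (hμν : μ ≪ ν) : ∀ᵐ x ∂μ, 0 < (μ.rnDeriv ν x).toReal := by
  filter_upwards [Measure.rnDeriv_pos hμν, hμν.ae_le (Measure.rnDeriv_lt_top μ ν)] with x h0 ht
    using ENNReal.toReal_pos h0.ne' ht.ne

lemma llr_withDensity_ofReal_right {α : Type*} [MeasurableSpace α] {μ ν : Measure α}
    [SigmaFinite μ] [SigmaFinite ν] {f : α → ℝ} (hμν : μ ≪ ν) (hf : AEMeasurable f ν)
    (hf_pos : ∀ᵐ x ∂ν, 0 < f x) :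
    llr μ (ν.withDensity fun x ↦ ENNReal.ofReal (f x)) =ᵐ[μ] fun x ↦ llr μ ν x - log (f x) := by
  have h_rn := Measure.rnDeriv_withDensity_right μ ν hf.ennreal_ofReal
    (by filter_upwards [hf_pos] with x hx using (ENNReal.ofReal_pos.2 hx).ne')
    (.of_forall fun _ ↦ ENNReal.ofReal_ne_top)
  filter_upwards [hμν.ae_le h_rn, rnDeriv_toReal_pos hμν, hμν.ae_le hf_pos] with x hx hx_pos hfx
  rw [llr, hx, ENNReal.toReal_mul, ENNReal.toReal_inv, ENNReal.toReal_ofReal hfx.le,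
    log_mul (inv_ne_zero hfx.ne') hx_pos.ne', log_inv, llr]
  ring

section Product

variable {α β : Type*} [MeasurableSpace α] [MeasurableSpace β]
  {μ₁ ν₁ : Measure α} {μ₂ ν₂ : Measure β}

lemma rnDeriv_prod_prod [SigmaFinite μ₁] [SigmaFinite μ₂] [SigmaFinite ν₁] [SigmaFinite ν₂]
    (h₁ : μ₁ ≪ ν₁) (h₂ : μ₂ ≪ ν₂) :
    (μ₁.prod μ₂).rnDeriv (ν₁.prod ν₂) =ᵐ[ν₁.prod ν₂]
      fun z ↦ μ₁.rnDeriv ν₁ z.1 * μ₂.rnDeriv ν₂ z.2 := by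
  conv_lhs => rw [← Measure.withDensity_rnDeriv_eq μ₁ ν₁ h₁,
    ← Measure.withDensity_rnDeriv_eq μ₂ ν₂ h₂,
    prod_withDensity (Measure.measurable_rnDeriv _ _) (Measure.measurable_rnDeriv _ _)]
  exact Measure.rnDeriv_withDensity _ (by fun_prop)

lemma llr_prod_prod [SigmaFinite μ₁] [SigmaFinite μ₂] [SigmaFinite ν₁] [SigmaFinite ν₂]
    (h₁ : μ₁ ≪ ν₁) (h₂ : μ₂ ≪ ν₂) :
    llr (μ₁.prod μ₂) (ν₁.prod ν₂) =ᵐ[μ₁.prod μ₂] fun z ↦ llr μ₁ ν₁ z.1 + llr μ₂ ν₂ z.2 := by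
  filter_upwards [(h₁.prod h₂).ae_le (rnDeriv_prod_prod h₁ h₂),
    Measure.quasiMeasurePreserving_fst.ae (rnDeriv_toReal_pos h₁),
    Measure.quasiMeasurePreserving_snd.ae (rnDeriv_toReal_pos h₂)] with z hz hz₁ hz₂
  rw [llr, hz, ENNReal.toReal_mul, log_mul hz₁.ne' hz₂.ne', llr, llr]

end Product

section Fubini

variable {α β : Type*} [MeasurableSpace α] [MeasurableSpace β]
  {μ₁ : Measure α} {μ₂ : Measure β} [IsProbabilityMeasure μ₁] [IsProbabilityMeasure μ₂]
  {a h : α → ℝ} {b : β → ℝ} {k : α × β → ℝ}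

lemma integral_prod_add_sub_eq
    (hG : Integrable (fun z ↦ a z.1 + b z.2 - k z) (μ₁.prod μ₂))
    (hk : ∀ᵐ x ∂μ₁, Integrable (fun y ↦ k (x, y)) μ₂ ∧ h x = ∫ y, k (x, y) ∂μ₂) :
    Integrable (fun x ↦ a x - h x) μ₁ ∧
      ∫ z, a z.1 + b z.2 - k z ∂(μ₁.prod μ₂) = ∫ x, a x - h x ∂μ₁ + ∫ y, b y ∂μ₂ := by
  have h_sec := hG.prod_right_ae
  have hb : Integrable b μ₂ := by
    obtain ⟨x, hGx, hkx, -⟩ := (h_sec.and hk).exists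
    convert (hGx.add hkx).sub (integrable_const (a x)) using 1
    ext y
    simp only [Pi.add_apply, Pi.sub_apply]
    ring
  have h_inner : ∀ᵐ x ∂μ₁, ∫ y, a x + b y - k (x, y) ∂μ₂ = (a x - h x) + ∫ y, b y ∂μ₂ := by
    filter_upwards [hk] with x ⟨hkx, hx⟩
    have hb' : Integrable (fun y ↦ a x + b y) μ₂ := (integrable_const _).add hb
    rw [integral_sub hb' hkx, integral_add (integrable_const _) hb,
      integral_const, probReal_univ, one_smul, ← hx]
    ring
  have h_int : Integrable (fun x ↦ a x - h x) μ₁ := by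
    convert (hG.integral_prod_left.congr h_inner).sub (integrable_const (∫ y, b y ∂μ₂)) using 1
    ext x
    simp only [Pi.sub_apply]
    ring
  refine ⟨h_int, ?_⟩
  rw [integral_prod _ hG, integral_congr_ae h_inner, integral_add h_int (integrable_const _),
    integral_const, probReal_univ, one_smul]

end Fubini

section MeanField

variable {X₁ X₂ : Type*} [MeasurableSpace X₁] [MeasurableSpace X₂]
  {ν₁ : Measure X₁} {ν₂ : Measure X₂} [SigmaFinite ν₁] [SigmaFinite ν₂]
  {q₁ : Measure X₁} {q₂ : Measure X₂} [IsProbabilityMeasure q₁] [IsProbabilityMeasure q₂]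
  {ρ : X₁ × X₂ → ℝ} {h : X₁ → ℝ}

lemma KLdiv_prod_withDensity_eq (hρ : Measurable ρ) (hρ_pos : ∀ y, 0 < ρ y)
    (hq₁ : q₁ ≪ ν₁) (hq₂ : q₂ ≪ ν₂)
    (hh : ∀ᵐ x₁ ∂q₁, Integrable (fun x₂ ↦ log (ρ (x₁, x₂))) q₂ ∧
      h x₁ = ∫ x₂, log (ρ (x₁, x₂)) ∂q₂)
    (h_int : Integrable (llr (q₁.prod q₂) ((ν₁.prod ν₂).withDensity fun y ↦ ENNReal.ofReal (ρ y)))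
      (q₁.prod q₂)) :
    Integrable (fun x₁ ↦ llr q₁ ν₁ x₁ - h x₁) q₁ ∧
      KLdiv (q₁.prod q₂) ((ν₁.prod ν₂).withDensity fun y ↦ ENNReal.ofReal (ρ y)) =
        ∫ x₁, llr q₁ ν₁ x₁ - h x₁ ∂q₁ + ∫ x₂, llr q₂ ν₂ x₂ ∂q₂ := by
  have h_llr : llr (q₁.prod q₂) ((ν₁.prod ν₂).withDensity fun y ↦ ENNReal.ofReal (ρ y))
      =ᵐ[q₁.prod q₂] fun z ↦ llr q₁ ν₁ z.1 + llr q₂ ν₂ z.2 - log (ρ z) := by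
    filter_upwards [llr_withDensity_ofReal_right (hq₁.prod hq₂) hρ.aemeasurable
        (.of_forall hρ_pos), llr_prod_prod hq₁ hq₂] with z hz hz'
    rw [hz, hz']
  obtain ⟨h_int', h_eq⟩ := integral_prod_add_sub_eq (h_int.congr h_llr) hh
  exact ⟨h_int', (integral_congr_ae h_llr).trans h_eq⟩

lemma KLdiv_prod_withDensity_eq_KLdiv_tilted (hρ : Measurable ρ) (hρ_pos : ∀ y, 0 < ρ y)
    (hq₁ : q₁ ≪ ν₁) (hq₂ : q₂ ≪ ν₂)
    (hh : ∀ᵐ x₁ ∂ν₁, Integrable (fun x₂ ↦ log (ρ (x₁, x₂))) q₂ ∧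
      h x₁ = ∫ x₂, log (ρ (x₁, x₂)) ∂q₂)
    (h_exp : Integrable (fun x₁ ↦ exp (h x₁)) ν₁)
    (h_int : Integrable (llr (q₁.prod q₂) ((ν₁.prod ν₂).withDensity fun y ↦ ENNReal.ofReal (ρ y)))
      (q₁.prod q₂)) :
    Integrable (llr q₁ (ν₁.tilted h)) q₁ ∧
      KLdiv (q₁.prod q₂) ((ν₁.prod ν₂).withDensity fun y ↦ ENNReal.ofReal (ρ y)) =
        KLdiv q₁ (ν₁.tilted h) - log (∫ x₁, exp (h x₁) ∂ν₁) + ∫ x₂, llr q₂ ν₂ x₂ ∂q₂ := by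
  obtain ⟨h_int₁, h_eq⟩ := KLdiv_prod_withDensity_eq hρ hρ_pos hq₁ hq₂ (hq₁.ae_le hh) h_int
  have h_llr : llr q₁ (ν₁.tilted h) =ᵐ[q₁]
      fun x₁ ↦ (llr q₁ ν₁ x₁ - h x₁) + log (∫ x₁, exp (h x₁) ∂ν₁) := by
    filter_upwards [llr_tilted_right hq₁ h_exp] with x hx
    rw [hx]
    ring
  have h_int_tilted := (h_int₁.add (integrable_const _)).congr h_llr.symm
  refine ⟨h_int_tilted, ?_⟩
  rw [h_eq, KLdiv, ← llr_def, integral_congr_ae h_llr, integral_add h_int₁ (integrable_const _),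
    integral_const, probReal_univ, one_smul]
  ring

end MeanField

theorem mfvb_coordinate_update_optimal_general
    {X₁ X₂ : Type*} [MeasurableSpace X₁] [MeasurableSpace X₂]
    (ν₁ : Measure X₁) (ν₂ : Measure X₂) [SigmaFinite ν₁] [SigmaFinite ν₂]
    (p : Measure (X₁ × X₂))
    (ρ : X₁ × X₂ → ℝ) (hρmeas : Measurable ρ) (hρpos : ∀ y, 0 < ρ y)
    (hp : p = (ν₁.prod ν₂).withDensity (fun y => ENNReal.ofReal (ρ y)))
    (q₂ : Measure X₂) [IsProbabilityMeasure q₂] (hq₂ : q₂ ≪ ν₂)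
    (h : X₁ → ℝ)
    (hh : ∀ᵐ x₁ ∂ν₁, Integrable (fun x₂ => Real.log (ρ (x₁, x₂))) q₂ ∧
      h x₁ = ∫ x₂, Real.log (ρ (x₁, x₂)) ∂q₂)
    (hexp : Integrable (fun x₁ => Real.exp (h x₁)) ν₁)
    (Z₁ : ℝ) (hZ : Z₁ = ∫ x₁, Real.exp (h x₁) ∂ν₁)
    (q₁star : Measure X₁) [IsProbabilityMeasure q₁star]
    (hq₁star : q₁star =
      ν₁.withDensity (fun x₁ => ENNReal.ofReal (Real.exp (h x₁) / Z₁))) :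
    ∀ (q₁ : Measure X₁), IsProbabilityMeasure q₁ → q₁ ≪ ν₁ →
      Integrable (fun y => Real.log (((q₁.prod q₂).rnDeriv p) y).toReal) (q₁.prod q₂) →
      Integrable (fun y => Real.log (((q₁star.prod q₂).rnDeriv p) y).toReal) (q₁star.prod q₂) →
      KLdiv (q₁.prod q₂) p ≥ KLdiv (q₁star.prod q₂) p ∧
        (KLdiv (q₁.prod q₂) p = KLdiv (q₁star.prod q₂) p ↔ q₁ = q₁star) := by
  intro q₁ _ hq₁ h_int h_int_star
  have h_tilted : q₁star = ν₁.tilted h := by rw [hq₁star, hZ]; rfl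
  subst hp h_tilted
  obtain ⟨h_int₁, h_eq⟩ :=
    KLdiv_prod_withDensity_eq_KLdiv_tilted hρmeas hρpos hq₁ hq₂ hh hexp h_int
  obtain ⟨-, h_eq_star⟩ := KLdiv_prod_withDensity_eq_KLdiv_tilted hρmeas hρpos
    (tilted_absolutelyContinuous ν₁ h) hq₂ hh hexp h_int_star
  have h_ac : q₁ ≪ ν₁.tilted h := hq₁.trans (absolutelyContinuous_tilted hexp)
  have h_self : KLdiv (ν₁.tilted h) (ν₁.tilted h) = 0 := by
    rw [KLdiv_eq_toReal_klDiv .rfl, klDiv_self, ENNReal.toReal_zero]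
  rw [h_eq, h_eq_star, h_self, ← KLdiv_eq_zero_iff h_ac h_int₁]
  exact ⟨by linarith [KLdiv_nonneg h_ac], by constructor <;> intro hKL <;> linarith⟩

/-- **Coordinate-wise optimality of the mean field update.**
Let `p` be a probability measure on `X₁ × X₂` with strictly positive density `ρ` with respect to
`ν₁ ⊗ ν₂`, fix a probability measure `q₂ ≪ ν₂`, and let
`h x₁ = ∫ log ρ(x₁, x₂) dq₂(x₂)` (defined `ν₁`-a.e.) with `Z₁ = ∫ e^h dν₁ ∈ (0, ∞)`.
Let `q₁*` have density `e^h / Z₁` with respect to `ν₁`. Then for every probability measure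
`q₁ ≪ ν₁` for which the relevant KL integrals are finite (integrable),
`KL(q₁ ⊗ q₂ ‖ p) ≥ KL(q₁* ⊗ q₂ ‖ p)`, with equality iff `q₁ = q₁*`. -/
theorem mfvb_coordinate_update_optimal
    {X₁ X₂ : Type*} [MeasurableSpace X₁] [MeasurableSpace X₂]
    (ν₁ : Measure X₁) (ν₂ : Measure X₂) [SigmaFinite ν₁] [SigmaFinite ν₂]
    (p : Measure (X₁ × X₂)) [IsProbabilityMeasure p]
    (ρ : X₁ × X₂ → ℝ) (hρmeas : Measurable ρ) (hρpos : ∀ y, 0 < ρ y)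
    (hp : p = (ν₁.prod ν₂).withDensity (fun y => ENNReal.ofReal (ρ y)))
    (q₂ : Measure X₂) [IsProbabilityMeasure q₂] (hq₂ : q₂ ≪ ν₂)
    (h : X₁ → ℝ)
    (hh : ∀ᵐ x₁ ∂ν₁, Integrable (fun x₂ => Real.log (ρ (x₁, x₂))) q₂ ∧
      h x₁ = ∫ x₂, Real.log (ρ (x₁, x₂)) ∂q₂)
    (hexp : Integrable (fun x₁ => Real.exp (h x₁)) ν₁)
    (Z₁ : ℝ) (hZ : Z₁ = ∫ x₁, Real.exp (h x₁) ∂ν₁) (hZpos : 0 < Z₁)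
    (q₁star : Measure X₁) [IsProbabilityMeasure q₁star]
    (hq₁star : q₁star =
      ν₁.withDensity (fun x₁ => ENNReal.ofReal (Real.exp (h x₁) / Z₁))) :
    ∀ (q₁ : Measure X₁), IsProbabilityMeasure q₁ → q₁ ≪ ν₁ →
      Integrable (fun y => Real.log (((q₁.prod q₂).rnDeriv p) y).toReal) (q₁.prod q₂) →
      Integrable (fun y => Real.log (((q₁star.prod q₂).rnDeriv p) y).toReal) (q₁star.prod q₂) →
      KLdiv (q₁.prod q₂) p ≥ KLdiv (q₁star.prod q₂) p ∧
        (KLdiv (q₁.prod q₂) p = KLdiv (q₁star.prod q₂) p ↔ q₁ = q₁star) :=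
  mfvb_coordinate_update_optimal_general ν₁ ν₂ p ρ hρmeas hρpos hp q₂ hq₂ h hh hexp Z₁ hZ q₁star
    hq₁star
end

section
/- Let J be a finite index set, let (D_j)_{j∈J} be positive integers, and write Θ = ∏_{j∈J} ℝ^{D_j}. Suppose f : Θ → ℝ is block-affine, i.e., for every j ∈ J and every fixed value of the blocks (θ_k)_{k≠j}, the map θ_j ↦ f(θ) is an affine function of θ_j ∈ ℝ^{D_j}. Then there exist real coefficients G_r, indexed by tuples r = (r_j)_{j∈J} with each r_j ∈ {∅} ∪ {1, …, D_j}, such that for all θ ∈ Θ, f(θ) = Σ_r G_r ∏_{j∈J} θ_{j, r_j}, where by convention θ_{j, ∅} := 1. In particular f is a polynomial containing at most one coordinate factor from each block θ_j in every monomial. -/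
/-!
Affinity in the block `θ j` gives
`f θ = f (θ[j ↦ 0]) + ∑ i, θ j i * (f (θ[j ↦ eᵢ]) - f (θ[j ↦ 0]))`,
and the coefficient functions on the right are again block-affine but no longer depend on `θ j`.
Peeling off the blocks one at a time, a block-affine function that depends only on the blocks in
`s` lies in the span of the monomials using at most one coordinate of each block of `s`.
-/

open Finset Function

theorem eq_of_forall_update_eq {J : Type*} [Fintype J] [DecidableEq J] {X : J → Type*}
    {β : Type*} {f : (∀ j, X j) → β} (hf : ∀ j x (v : X j), f (update x j v) = f x)
    (x y : ∀ j, X j) : f x = f y := by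
  have key : ∀ t : Finset J, f (t.piecewise y x) = f x := by
    intro t
    induction t using Finset.induction with
    | empty => simp
    | insert j t _ ih => rw [piecewise_insert, hf, ih]
  simpa using (key univ).symm

section BlockAffine

variable {J : Type*} {ι : J → Type*} {R : Type*} [CommRing R]

section Affine

variable [DecidableEq J] [∀ j, Fintype (ι j)]

def IsAffineIn (j : J) (f : (∀ j, ι j → R) → R) : Prop :=
  ∀ θ : ∀ j, ι j → R, ∃ (a : ι j → R) (b : R), ∀ v : ι j → R,
    f (update θ j v) = (∑ i, a i * v i) + b

def IsConstIn (j : J) (f : (∀ j, ι j → R) → R) : Prop :=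
  ∀ (θ : ∀ j, ι j → R) (v : ι j → R), f (update θ j v) = f θ

variable (ι R) in
def blockAffineOn (s : Finset J) : Submodule R ((∀ j, ι j → R) → R) where
  carrier := {f | (∀ j, IsAffineIn j f) ∧ ∀ j ∉ s, IsConstIn j f}
  zero_mem' := ⟨fun _ _ => ⟨0, 0, by simp⟩, fun _ _ _ _ => rfl⟩
  add_mem' := by
    rintro f g ⟨hf, hf'⟩ ⟨hg, hg'⟩
    refine ⟨fun j θ => ?_, fun j hj θ v => by simp [hf' j hj θ v, hg' j hj θ v]⟩
    obtain ⟨a, b, hab⟩ := hf j θ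
    obtain ⟨c, d, hcd⟩ := hg j θ
    exact ⟨a + c, b + d, fun v => by simp [hab, hcd, add_mul, sum_add_distrib]; ring⟩
  smul_mem' := by
    rintro c f ⟨hf, hf'⟩
    refine ⟨fun j θ => ?_, fun j hj θ v => by simp [hf' j hj θ v]⟩
    obtain ⟨a, b, hab⟩ := hf j θ
    exact ⟨c • a, c * b, fun v => by simp [hab, mul_add, mul_sum, mul_assoc]⟩

theorem IsAffineIn.eq_add_sum [∀ j, DecidableEq (ι j)] {j : J} {f : (∀ j, ι j → R) → R}
    (hf : IsAffineIn j f) (θ : ∀ j, ι j → R) :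
    f θ = f (update θ j 0) +
      ∑ i, θ j i * (f (update θ j (Pi.single i 1)) - f (update θ j 0)) := by
  obtain ⟨a, b, hab⟩ := hf θ
  have hθ := hab (θ j)
  rw [update_eq_self] at hθ
  simp [hθ, hab, Pi.single_apply, mul_comm, add_comm]

theorem comp_update_mem_blockAffineOn {s : Finset J} {j : J} {f : (∀ j, ι j → R) → R}
    (hf : f ∈ blockAffineOn ι R (insert j s)) (w : ι j → R) :
    (fun θ => f (update θ j w)) ∈ blockAffineOn ι R s := by
  obtain ⟨haff, hconst⟩ := hf
  refine ⟨fun k θ => ?_, fun k hk θ v => ?_⟩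
  · by_cases hkj : k = j
    · subst hkj
      exact ⟨0, f (update θ k w), fun v => by simp⟩
    · obtain ⟨a, b, hab⟩ := haff k (update θ j w)
      exact ⟨a, b, fun v => by simp only [update_comm hkj, hab]⟩
  · by_cases hkj : k = j
    · subst hkj
      simp
    · simp only [update_comm hkj]
      exact hconst k (by simp [hkj, hk]) _ v

end Affine

section Monomials

variable [Fintype J]

variable (R) in
def blockMonomial (r : ∀ j, Option (ι j)) (θ : ∀ j, ι j → R) : R :=
  ∏ j, (r j).elim 1 (θ j)

variable (ι R) in
def monomialsOn (s : Finset J) : Submodule R ((∀ j, ι j → R) → R) :=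
  Submodule.span R (blockMonomial R '' {r | ∀ j ∉ s, r j = none})

theorem monomialsOn_mono {s t : Finset J} (h : s ⊆ t) :
    monomialsOn ι R s ≤ monomialsOn ι R t :=
  Submodule.span_mono (Set.image_mono fun _ hr j hj => hr j fun hjs => hj (h hjs))

theorem blockMonomial_update_some [DecidableEq J] {r : ∀ j, Option (ι j)} {j : J}
    (hr : r j = none) (i : ι j) (θ : ∀ j, ι j → R) :
    blockMonomial R (update r j (some i)) θ = θ j i * blockMonomial R r θ := by
  unfold blockMonomial
  rw [← mul_prod_erase _ _ (mem_univ j), ← mul_prod_erase _ _ (mem_univ j), hr]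
  simp only [update_self, Option.elim_some, Option.elim_none, one_mul]
  congr 1
  exact prod_congr rfl fun k hk => by rw [update_of_ne (ne_of_mem_erase hk)]

theorem mul_coord_mem_monomialsOn [DecidableEq J] {s : Finset J} {j : J} (hj : j ∉ s) (i : ι j)
    {g : (∀ j, ι j → R) → R} (hg : g ∈ monomialsOn ι R s) :
    (fun θ => θ j i * g θ) ∈ monomialsOn ι R (insert j s) := by
  let coordMul := LinearMap.mulLeft R (fun θ : ∀ j, ι j → R => θ j i)
  suffices (monomialsOn ι R s).map coordMul ≤ monomialsOn ι R (insert j s) from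
    this ⟨g, hg, rfl⟩
  refine (Submodule.map_span_le _ _ _).2 ?_
  rintro _ ⟨r, hr, rfl⟩
  refine Submodule.subset_span ⟨update r j (some i), fun k hk => ?_, ?_⟩
  · rw [update_of_ne (by rintro rfl; simp at hk)]
    exact hr k (by simp_all)
  · funext θ
    exact blockMonomial_update_some (hr j hj) i θ

end Monomials

theorem blockAffineOn_le_monomialsOn [Fintype J] [DecidableEq J] [∀ j, Fintype (ι j)]
    [∀ j, DecidableEq (ι j)] (s : Finset J) :
    blockAffineOn ι R s ≤ monomialsOn ι R s := by
  induction s using Finset.induction with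
  | empty =>
    intro f ⟨_, hconst⟩
    have hf_const : f = f 0 • blockMonomial R (fun _ => none) := by
      funext θ
      simp [blockMonomial, eq_of_forall_update_eq (fun j => hconst j (notMem_empty j)) θ 0]
    rw [hf_const]
    exact Submodule.smul_mem _ _ (Submodule.subset_span ⟨_, fun _ _ => rfl, rfl⟩)
  | insert j t hj ih =>
    intro f hf
    have base := comp_update_mem_blockAffineOn hf 0
    have hdecomp : f = (fun θ => f (update θ j 0)) + ∑ i, fun θ =>
        θ j i * (f (update θ j (Pi.single i 1)) - f (update θ j 0)) :=
      funext fun θ => by simpa using (hf.1 j).eq_add_sum θ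
    rw [hdecomp]
    refine Submodule.add_mem _ (monomialsOn_mono (subset_insert j t) (ih base)) ?_
    refine Submodule.sum_mem _ fun i _ => mul_coord_mem_monomialsOn hj i (ih ?_)
    exact Submodule.sub_mem _ (comp_update_mem_blockAffineOn hf _) base

end BlockAffine

theorem block_affine_polynomial_representation_general
    {J : Type*} [Fintype J] [DecidableEq J] (D : J → ℕ)
    (f : (∀ j, Fin (D j) → ℝ) → ℝ)
    (haff : ∀ (j : J) (θ : ∀ j, Fin (D j) → ℝ),
      ∃ (a : Fin (D j) → ℝ) (b : ℝ), ∀ v : Fin (D j) → ℝ,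
        f (Function.update θ j v) = (∑ i, a i * v i) + b) :
    ∃ G : (∀ j, Option (Fin (D j))) → ℝ,
      ∀ θ : ∀ j, Fin (D j) → ℝ,
        f θ = ∑ r : ∀ j, Option (Fin (D j)), G r * ∏ j, (r j).elim 1 (fun i => θ j i) := by
  have hf : f ∈ monomialsOn (fun j => Fin (D j)) ℝ univ :=
    blockAffineOn_le_monomialsOn univ ⟨haff, fun j hj => absurd (mem_univ j) hj⟩
  simp only [monomialsOn, mem_univ, not_true_eq_false, IsEmpty.forall_iff, implies_true,
    Set.ofPred_true, Set.image_univ, Submodule.mem_span_range_iff_exists_fun] at hf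
  obtain ⟨G, hG⟩ := hf
  exact ⟨G, fun θ => by simp [← hG, blockMonomial]⟩

/-- **Block-affine functions are multilinear polynomials with at most one factor per block.**
Let `Θ = ∏ j, ℝ^{D j}` and suppose `f : Θ → ℝ` is affine in each block `θ j` when the other
blocks are held fixed. Then there are coefficients `G r`, indexed by tuples
`r : ∀ j, Option (Fin (D j))` (where `r j = none` means the constant factor `1`), such that
`f θ = ∑ r, G r * ∏ j, θ_{j, r j}` for all `θ`. -/
theorem block_affine_polynomial_representation
    {J : Type*} [Fintype J] [DecidableEq J] (D : J → ℕ) (hD : ∀ j, 0 < D j)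
    (f : (∀ j, Fin (D j) → ℝ) → ℝ)
    (haff : ∀ (j : J) (θ : ∀ j, Fin (D j) → ℝ),
      ∃ (a : Fin (D j) → ℝ) (b : ℝ), ∀ v : Fin (D j) → ℝ,
        f (Function.update θ j v) = (∑ i, a i * v i) + b) :
    ∃ G : (∀ j, Option (Fin (D j))) → ℝ,
      ∀ θ : ∀ j, Fin (D j) → ℝ,
        f θ = ∑ r : ∀ j, Option (Fin (D j)), G r * ∏ j, (r j).elim 1 (fun i => θ j i) :=
  block_affine_polynomial_representation_general D f haff
end

section
/- Let n be a positive integer partitioned into J blocks, and let Λ be an invertible n × n real matrix whose diagonal blocks Λ_{jj} are each invertible. Let μ ∈ ℝⁿ and suppose m ∈ ℝⁿ satisfies, for every block index j, the fixed-point equation m_j = μ_j − Λ_{jj}^{-1} Σ_{k≠j} Λ_{jk}(m_k − μ_k), where m_j, μ_j denote the j-th blocks of m, μ. Then m = μ. -/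
/-!
Put `x = m - μ`. Multiplying the `j`-th fixed-point equation by the invertible block `Λ_{jj}` gives
`Λ_{jj} x_j + ∑_{k ≠ j} Λ_{jk} x_k = 0`, which is the `j`-th block row of `Λ x = 0`.
Since `Λ` is invertible, `x = 0`.
-/

open Matrix Finset

namespace Matrix

variable {ι : Type*} [Fintype ι] [DecidableEq ι] {d : ι → Type*} [∀ j, Fintype (d j)]

theorem mulVec_sigma_apply {R : Type*} [NonUnitalNonAssocSemiring R]
    (M : Matrix (Σ j, d j) (Σ j, d j) R) (v : (Σ j, d j) → R)
    (j : ι) (a : d j) :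
    (M *ᵥ v) ⟨j, a⟩ = (M.blockDiag' j *ᵥ fun b => v ⟨j, b⟩) a +
      ∑ k ∈ univ.erase j, ∑ b : d k, M ⟨j, a⟩ ⟨k, b⟩ * v ⟨k, b⟩ := by
  rw [mulVec, dotProduct, ← univ_sigma_univ, sum_sigma, ← add_sum_erase _ _ (mem_univ j)]
  rfl

theorem mulVec_sub_eq_zero_of_blockwise_fixed_point {K : Type*} [CommRing K]
    [∀ j, DecidableEq (d j)] (M : Matrix (Σ j, d j) (Σ j, d j) K)
    (hdiag : ∀ j, IsUnit (M.blockDiag' j).det) (μ m : (Σ j, d j) → K)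
    (hfix : ∀ j, (fun a => m ⟨j, a⟩) = (fun a => μ ⟨j, a⟩) - (M.blockDiag' j)⁻¹ *ᵥ
      fun a => ∑ k ∈ univ.erase j, ∑ b : d k, M ⟨j, a⟩ ⟨k, b⟩ * (m ⟨k, b⟩ - μ ⟨k, b⟩)) :
    M *ᵥ (m - μ) = 0 := by
  ext ⟨j, a⟩
  set S := fun a => ∑ k ∈ univ.erase j, ∑ b : d k, M ⟨j, a⟩ ⟨k, b⟩ * (m ⟨k, b⟩ - μ ⟨k, b⟩)
  have hblock : (fun b => (m - μ) ⟨j, b⟩) = -((M.blockDiag' j)⁻¹ *ᵥ S) := by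
    funext b
    have hfix_b := congrFun (hfix j) b
    simp only [Pi.sub_apply, Pi.neg_apply] at hfix_b ⊢
    rw [hfix_b]
    ring
  have hdiag_mul : M.blockDiag' j *ᵥ (fun b => (m - μ) ⟨j, b⟩) = -S := by
    rw [hblock, mulVec_neg, mulVec_mulVec, mul_nonsing_inv _ (hdiag j), one_mulVec]
  rw [mulVec_sigma_apply, hdiag_mul]
  simp [S]

end Matrix

theorem mfvb_normal_fixed_point_mean_general
    (J : ℕ) (d : Fin J → ℕ)
    (Λ : Matrix ((j : Fin J) × Fin (d j)) ((j : Fin J) × Fin (d j)) ℝ)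
    (hΛ : IsUnit Λ.det)
    (hdiag : ∀ j : Fin J,
      IsUnit (Matrix.of (fun a b : Fin (d j) => Λ ⟨j, a⟩ ⟨j, b⟩)).det)
    (μ m : ((j : Fin J) × Fin (d j)) → ℝ)
    (hfix : ∀ j : Fin J,
      (fun a : Fin (d j) => m ⟨j, a⟩) =
        (fun a : Fin (d j) => μ ⟨j, a⟩) -
          (Matrix.of (fun a b : Fin (d j) => Λ ⟨j, a⟩ ⟨j, b⟩))⁻¹.mulVec
            (fun a : Fin (d j) =>
              ∑ k ∈ Finset.univ.erase j, ∑ b : Fin (d k),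
                Λ ⟨j, a⟩ ⟨k, b⟩ * (m ⟨k, b⟩ - μ ⟨k, b⟩))) :
    m = μ :=
  sub_eq_zero.mp <| eq_zero_of_mulVec_eq_zero hΛ.ne_zero <|
    mulVec_sub_eq_zero_of_blockwise_fixed_point Λ hdiag μ m hfix

/-- **MFVB fixed point for a multivariate normal recovers the true mean.**
Index `n = ∑ j, d j` by pairs `⟨j, a⟩` with `j` a block index and `a` an index within block `j`.
Let `Λ` be an invertible matrix whose diagonal blocks `Λ_{jj}` are invertible, and suppose `m`
satisfies the block fixed-point equations
`m_j = μ_j − Λ_{jj}⁻¹ ∑_{k ≠ j} Λ_{jk} (m_k − μ_k)` for every `j`. Then `m = μ`. -/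
theorem mfvb_normal_fixed_point_mean
    (J : ℕ) (hJ : 0 < J) (d : Fin J → ℕ) (hd : ∀ j, 0 < d j)
    (Λ : Matrix ((j : Fin J) × Fin (d j)) ((j : Fin J) × Fin (d j)) ℝ)
    (hΛ : IsUnit Λ.det)
    (hdiag : ∀ j : Fin J,
      IsUnit (Matrix.of (fun a b : Fin (d j) => Λ ⟨j, a⟩ ⟨j, b⟩)).det)
    (μ m : ((j : Fin J) × Fin (d j)) → ℝ)
    (hfix : ∀ j : Fin J,
      (fun a : Fin (d j) => m ⟨j, a⟩) =
        (fun a : Fin (d j) => μ ⟨j, a⟩) -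
          (Matrix.of (fun a b : Fin (d j) => Λ ⟨j, a⟩ ⟨j, b⟩))⁻¹.mulVec
            (fun a : Fin (d j) =>
              ∑ k ∈ Finset.univ.erase j, ∑ b : Fin (d k),
                Λ ⟨j, a⟩ ⟨k, b⟩ * (m ⟨k, b⟩ - μ ⟨k, b⟩))) :
    m = μ :=
  mfvb_normal_fixed_point_mean_general J d Λ hΛ hdiag μ m hfix
end

section
/- Let V_α, H_α be a × a real matrices, V_z, H_z be b × b real matrices, and H_{αz} (a × b), H_{zα} (b × a) real matrices. Form the block matrices V := fromBlocks V_α 0 0 V_z and H := fromBlocks H_α H_{αz} H_{zα} H_z of size (a+b) × (a+b). Assume I − VH is invertible, I_z − V_z H_z is invertible, and K := I_α − V_α H_α − V_α H_{αz} (I_z − V_z H_z)^{-1} V_z H_{zα} is invertible. Then the upper-left a × a block of (I − VH)^{-1} V equals K^{-1} V_α. -/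
/-!
`1 - V * H` is the block matrix `[[1 - Vα Hα, -Vα Hαz], [-Vz Hzα, 1 - Vz Hz]]`, and `K` is its
Schur complement with respect to the lower right block. The upper left block of the inverse of a
block matrix is the inverse of that Schur complement, and right multiplication by the
block-diagonal `V` multiplies this block by `Vα`.
-/

open Matrix

namespace Matrix

variable {l m α : Type*} [Fintype l] [Fintype m]

theorem toBlocks₁₁_mul_fromBlocks_zero [NonUnitalNonAssocSemiring α]
    (M : Matrix (l ⊕ m) (l ⊕ m) α) (P : Matrix l l α) (Q : Matrix m m α) :
    (M * fromBlocks P 0 0 Q).toBlocks₁₁ = M.toBlocks₁₁ * P := by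
  rw [← fromBlocks_toBlocks M, fromBlocks_multiply]
  simp

theorem one_sub_fromBlocks_zero_mul_fromBlocks [DecidableEq l] [DecidableEq m] [Ring α]
    (P : Matrix l l α) (Q : Matrix m m α) (A : Matrix l l α) (B : Matrix l m α)
    (C : Matrix m l α) (D : Matrix m m α) :
    1 - fromBlocks P 0 0 Q * fromBlocks A B C D =
      fromBlocks (1 - P * A) (-(P * B)) (-(Q * C)) (1 - Q * D) := by
  rw [fromBlocks_multiply, ← fromBlocks_one, sub_eq_add_neg, fromBlocks_neg, fromBlocks_add]
  simp [sub_eq_add_neg]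

theorem toBlocks₁₁_inv_fromBlocks_of_isUnit_det₂₂ [DecidableEq l] [DecidableEq m] [CommRing α]
    (A : Matrix l l α) (B : Matrix l m α) (C : Matrix m l α) (D : Matrix m m α)
    (hD : IsUnit D.det) (hS : IsUnit (A - B * D⁻¹ * C).det) :
    (fromBlocks A B C D)⁻¹.toBlocks₁₁ = (A - B * D⁻¹ * C)⁻¹ := by
  let := invertibleOfIsUnitDet D hD
  let : Invertible (A - B * ⅟D * C) := by
    rw [invOf_eq_nonsing_inv]; exact invertibleOfIsUnitDet _ hS
  let := fromBlocks₂₂Invertible A B C D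
  rw [← invOf_eq_nonsing_inv, invOf_fromBlocks₂₂_eq, toBlocks_fromBlocks₁₁,
    invOf_eq_nonsing_inv, invOf_eq_nonsing_inv]

end Matrix

theorem lrvb_schur_complement_block_general
    {a b : ℕ}
    (Vα Hα : Matrix (Fin a) (Fin a) ℝ) (Vz Hz : Matrix (Fin b) (Fin b) ℝ)
    (Hαz : Matrix (Fin a) (Fin b) ℝ) (Hzα : Matrix (Fin b) (Fin a) ℝ)
    (V H : Matrix (Fin a ⊕ Fin b) (Fin a ⊕ Fin b) ℝ)
    (hV : V = Matrix.fromBlocks Vα 0 0 Vz)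
    (hH : H = Matrix.fromBlocks Hα Hαz Hzα Hz)
    (hz : IsUnit (1 - Vz * Hz).det)
    (K : Matrix (Fin a) (Fin a) ℝ)
    (hK : K = 1 - Vα * Hα - Vα * Hαz * (1 - Vz * Hz)⁻¹ * Vz * Hzα)
    (hKu : IsUnit K.det) :
    ((1 - V * H)⁻¹ * V).toBlocks₁₁ = K⁻¹ * Vα := by
  have hSchur : K = 1 - Vα * Hα - -(Vα * Hαz) * (1 - Vz * Hz)⁻¹ * -(Vz * Hzα) := by
    simp only [hK, Matrix.neg_mul, Matrix.mul_neg, neg_neg, Matrix.mul_assoc]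
  subst hV hH
  rw [toBlocks₁₁_mul_fromBlocks_zero, one_sub_fromBlocks_zero_mul_fromBlocks, hSchur,
    toBlocks₁₁_inv_fromBlocks_of_isUnit_det₂₂ _ _ _ _ hz (hSchur ▸ hKu)]

/-- **Schur-complement formula for the interest-parameter block of the LRVB covariance.**
With `V = fromBlocks Vα 0 0 Vz` and `H = fromBlocks Hα Hαz Hzα Hz`, if `I − V H`,
`I_z − Vz Hz`, and `K := I_α − Vα Hα − Vα Hαz (I_z − Vz Hz)⁻¹ Vz Hzα` are invertible, then
the upper-left block of `(I − V H)⁻¹ V` equals `K⁻¹ Vα`. -/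
theorem lrvb_schur_complement_block
    {a b : ℕ}
    (Vα Hα : Matrix (Fin a) (Fin a) ℝ) (Vz Hz : Matrix (Fin b) (Fin b) ℝ)
    (Hαz : Matrix (Fin a) (Fin b) ℝ) (Hzα : Matrix (Fin b) (Fin a) ℝ)
    (V H : Matrix (Fin a ⊕ Fin b) (Fin a ⊕ Fin b) ℝ)
    (hV : V = Matrix.fromBlocks Vα 0 0 Vz)
    (hH : H = Matrix.fromBlocks Hα Hαz Hzα Hz)
    (hVH : IsUnit (1 - V * H).det)
    (hz : IsUnit (1 - Vz * Hz).det)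
    (K : Matrix (Fin a) (Fin a) ℝ)
    (hK : K = 1 - Vα * Hα - Vα * Hαz * (1 - Vz * Hz)⁻¹ * Vz * Hzα)
    (hKu : IsUnit K.det) :
    ((1 - V * H)⁻¹ * V).toBlocks₁₁ = K⁻¹ * Vα :=
  lrvb_schur_complement_block_general Vα Hα Vz Hz Hαz Hzα V H hV hH hz K hK hKu
end

section
/- Let m : ℝ → ℝ be twice differentiable with |m''(u)| ≤ C for all u ∈ ℝ, and let X be a real-valued random variable with E[X] = x, E[X²] < ∞, and E[|X − x|³] < ∞. Then |E[(m(X) − m(x))(X − x)] − m'(x) · Var(X)| ≤ (C/2) · E[|X − x|³]. In particular, since E[X − x] = 0, E[(m(X) − m(x))(X − x)] = Cov(m(X), X), so |Cov(m(X), X) − m'(x) Var(X)| ≤ (C/2) E[|X − x|³]. -/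
open MeasureTheory Real

/-!
Taylor's theorem with remainder bounded by `C/2 · (u - x)²` gives, pointwise,
`|(m u - m x)(u - x) - m' x (u - x)²| ≤ C/2 · |u - x|³`, and integrating this against the law
of `X` gives the bound. Since `X - x` has mean zero, replacing `m x` by the mean of `m (X)`
does not change the integral of `(m (X) - ·)(X - x)`.
-/

section Taylor

variable {E : Type*} [NormedAddCommGroup E] [NormedSpace ℝ E]
  {m m' m'' : ℝ → E} {C : ℝ}

theorem norm_sub_sub_smul_le_half_mul_sq_of_le
    (hd1 : ∀ u, HasDerivAt m (m' u) u) (hd2 : ∀ u, HasDerivAt m' (m'' u) u)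
    (hC : ∀ u, ‖m'' u‖ ≤ C) {x u : ℝ} (hxu : x ≤ u) :
    ‖m u - m x - (u - x) • m' x‖ ≤ C / 2 * (u - x) ^ 2 := by
  have hm'_lip : ∀ t ∈ Set.Icc x u, ‖m' t - m' x‖ ≤ C * (t - x) :=
    norm_image_sub_le_of_norm_deriv_le_segment' (fun t _ => (hd2 t).hasDerivWithinAt)
      (fun t _ => hC t)
  have hf : ∀ t, HasDerivAt (fun t => m t - m x - (t - x) • m' x) (m' t - m' x) t := fun t => by
    simpa using
      ((hd1 t).sub_const (m x)).fun_sub (((hasDerivAt_id t).sub_const x).smul_const (m' x))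
  have hB : ∀ t, HasDerivAt (fun t => C / 2 * (t - x) ^ 2) (C * (t - x)) t := fun t =>
    ((((hasDerivAt_id' t).sub_const x).fun_pow 2).const_mul (C / 2)).congr_deriv
      (by push_cast; ring)
  refine image_norm_le_of_norm_deriv_right_le_deriv_boundary
    (fun t _ => (hf t).continuousAt.continuousWithinAt) (fun t _ => (hf t).hasDerivWithinAt)
    (by simp) hB (fun t ht => hm'_lip t (Set.Ico_subset_Icc_self ht)) ⟨hxu, le_rfl⟩

theorem norm_sub_sub_smul_le_half_mul_sq
    (hd1 : ∀ u, HasDerivAt m (m' u) u) (hd2 : ∀ u, HasDerivAt m' (m'' u) u)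
    (hC : ∀ u, ‖m'' u‖ ≤ C) (x u : ℝ) :
    ‖m u - m x - (u - x) • m' x‖ ≤ C / 2 * (u - x) ^ 2 := by
  rcases le_total x u with hxu | hux
  · exact norm_sub_sub_smul_le_half_mul_sq_of_le hd1 hd2 hC hxu
  · -- reflect through `t ↦ -t` to reduce to the case `x ≤ u`
    have hd1' : ∀ t, HasDerivAt (fun t => m (-t)) (-m' (-t)) t := fun t => by
      simpa [Function.comp_def] using (hd1 (-t)).scomp t (hasDerivAt_neg t)
    have hd2' : ∀ t, HasDerivAt (fun t => -m' (-t)) (m'' (-t)) t := fun t => by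
      simpa [Function.comp_def] using ((hd2 (-t)).scomp t (hasDerivAt_neg t)).fun_neg
    have := norm_sub_sub_smul_le_half_mul_sq_of_le hd1' hd2' (fun t => hC (-t)) (neg_le_neg hux)
    rwa [neg_neg, neg_neg, smul_neg, neg_sub_neg, ← neg_neg (x - u), neg_sub, neg_sq, neg_smul,
      neg_neg] at this

end Taylor

section CenteredMoments

variable {m m' m'' : ℝ → ℝ} {C x : ℝ}

theorem abs_sub_mul_sub_sub_mul_sq_le
    (hd1 : ∀ u, HasDerivAt m (m' u) u) (hd2 : ∀ u, HasDerivAt m' (m'' u) u)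
    (hC : ∀ u, |m'' u| ≤ C) (u : ℝ) :
    |(m u - m x) * (u - x) - m' x * (u - x) ^ 2| ≤ C / 2 * |u - x| ^ 3 := by
  have htaylor :=
    norm_sub_sub_smul_le_half_mul_sq hd1 hd2 (fun v => (hC v).trans_eq' (norm_eq_abs _)) x u
  rw [norm_eq_abs, smul_eq_mul] at htaylor
  calc |(m u - m x) * (u - x) - m' x * (u - x) ^ 2|
      = |m u - m x - (u - x) * m' x| * |u - x| := by rw [← abs_mul]; ring_nf
    _ ≤ C / 2 * (u - x) ^ 2 * |u - x| := by gcongr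
    _ = C / 2 * |u - x| ^ 3 := by rw [← sq_abs]; ring

variable {Ω : Type*} [MeasurableSpace Ω] {μ : Measure Ω} {X : Ω → ℝ}

theorem integrable_sub_mul_sub_sub_mul_sq
    (hd1 : ∀ u, HasDerivAt m (m' u) u) (hd2 : ∀ u, HasDerivAt m' (m'' u) u)
    (hC : ∀ u, |m'' u| ≤ C) (hX : AEStronglyMeasurable X μ)
    (hX3 : Integrable (fun ω => |X ω - x| ^ 3) μ) :
    Integrable (fun ω => (m (X ω) - m x) * (X ω - x) - m' x * (X ω - x) ^ 2) μ := by
  have hm : Continuous m := continuous_iff_continuousAt.2 fun u => (hd1 u).continuousAt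
  have hXc : AEStronglyMeasurable (fun ω => X ω - x) μ := hX.sub aestronglyMeasurable_const
  exact (hX3.const_mul (C / 2)).mono'
    ((((hm.comp_aestronglyMeasurable hX).sub aestronglyMeasurable_const).mul hXc).sub
      ((hXc.pow 2).const_mul _))
    (ae_of_all _ fun ω => abs_sub_mul_sub_sub_mul_sq_le hd1 hd2 hC (X ω))

theorem integrable_sub_mul_sub
    (hd1 : ∀ u, HasDerivAt m (m' u) u) (hd2 : ∀ u, HasDerivAt m' (m'' u) u)
    (hC : ∀ u, |m'' u| ≤ C) (hX : AEStronglyMeasurable X μ)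
    (hX2 : Integrable (fun ω => (X ω - x) ^ 2) μ)
    (hX3 : Integrable (fun ω => |X ω - x| ^ 3) μ) :
    Integrable (fun ω => (m (X ω) - m x) * (X ω - x)) μ := by
  simpa using (integrable_sub_mul_sub_sub_mul_sq hd1 hd2 hC hX hX3).fun_add (hX2.const_mul (m' x))

theorem abs_integral_sub_mul_sub_sub_mul_integral_sq_le
    (hd1 : ∀ u, HasDerivAt m (m' u) u) (hd2 : ∀ u, HasDerivAt m' (m'' u) u)
    (hC : ∀ u, |m'' u| ≤ C) (hX : AEStronglyMeasurable X μ)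
    (hX2 : Integrable (fun ω => (X ω - x) ^ 2) μ)
    (hX3 : Integrable (fun ω => |X ω - x| ^ 3) μ) :
    |(∫ ω, (m (X ω) - m x) * (X ω - x) ∂μ) - m' x * ∫ ω, (X ω - x) ^ 2 ∂μ|
      ≤ C / 2 * ∫ ω, |X ω - x| ^ 3 ∂μ := by
  rw [← integral_const_mul, ← integral_const_mul,
    ← integral_sub (integrable_sub_mul_sub hd1 hd2 hC hX hX2 hX3) (hX2.const_mul _)]
  exact norm_integral_le_of_norm_le (hX3.const_mul _)
    (ae_of_all _ fun ω =>
      (norm_eq_abs _).trans_le (abs_sub_mul_sub_sub_mul_sq_le hd1 hd2 hC (X ω)))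

end CenteredMoments

theorem integral_sub_mul_eq_of_integral_eq_zero {Ω : Type*} [MeasurableSpace Ω] {μ : Measure Ω}
    {f g : Ω → ℝ} (a b : ℝ) (hfg : Integrable (fun ω => (f ω - a) * g ω) μ)
    (hg : Integrable g μ)
    (hg0 : ∫ ω, g ω ∂μ = 0) :
    ∫ ω, (f ω - a) * g ω ∂μ = ∫ ω, (f ω - b) * g ω ∂μ := by
  have hsplit : (fun ω => (f ω - b) * g ω) = fun ω => (f ω - a) * g ω + (a - b) * g ω := by
    funext ω; ring
  rw [hsplit, integral_add hfg (hg.const_mul _), integral_const_mul, hg0, mul_zero, add_zero]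

theorem influence_score_taylor_bound_general
    {Ω : Type*} [MeasurableSpace Ω] (P : Measure Ω) [IsProbabilityMeasure P]
    (m m' m'' : ℝ → ℝ) (C : ℝ)
    (hd1 : ∀ u, HasDerivAt m (m' u) u)
    (hd2 : ∀ u, HasDerivAt m' (m'' u) u)
    (hC : ∀ u, |m'' u| ≤ C)
    (X : Ω → ℝ) (x : ℝ)
    (hX1 : Integrable X P) (hmean : ∫ ω, X ω ∂P = x)
    (hX2 : Integrable (fun ω => (X ω) ^ 2) P)
    (hX3 : Integrable (fun ω => |X ω - x| ^ 3) P) :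
    |(∫ ω, (m (X ω) - m x) * (X ω - x) ∂P)
        - m' x * ∫ ω, (X ω - x) ^ 2 ∂P|
      ≤ C / 2 * ∫ ω, |X ω - x| ^ 3 ∂P ∧
    (∫ ω, (m (X ω) - m x) * (X ω - x) ∂P)
      = ∫ ω, (m (X ω) - ∫ ω', m (X ω') ∂P) * (X ω - x) ∂P := by
  have hXc2 : Integrable (fun ω => (X ω - x) ^ 2) P :=
    (((memLp_two_iff_integrable_sq hX1.1).2 hX2).sub (memLp_const x)).integrable_sq
  have hXc : Integrable (fun ω => X ω - x) P := hX1.sub (integrable_const x)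
  have hXc0 : ∫ ω, (X ω - x) ∂P = 0 := by
    rw [integral_sub hX1 (integrable_const x), hmean, integral_const, probReal_univ, one_smul,
      sub_self]
  exact ⟨abs_integral_sub_mul_sub_sub_mul_integral_sq_le hd1 hd2 hC hX1.1 hXc2 hX3,
    integral_sub_mul_eq_of_integral_eq_zero _ _
      (integrable_sub_mul_sub hd1 hd2 hC hX1.1 hXc2 hX3) hXc hXc0⟩

/-- **Taylor-expansion bound relating the influence score to a covariance.**
Let `m : ℝ → ℝ` be twice differentiable with `|m''| ≤ C`, and let `X` be a random variable
with mean `x`, finite second moment, and finite third absolute central moment. Then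
`|E[(m(X) − m(x))(X − x)] − m'(x)·Var(X)| ≤ (C/2)·E[|X − x|³]`; moreover, since
`E[X − x] = 0`, the quantity `E[(m(X) − m(x))(X − x)]` equals `Cov(m(X), X)`. -/
theorem influence_score_taylor_bound
    {Ω : Type*} [MeasurableSpace Ω] (P : Measure Ω) [IsProbabilityMeasure P]
    (m m' m'' : ℝ → ℝ) (C : ℝ)
    (hd1 : ∀ u, HasDerivAt m (m' u) u)
    (hd2 : ∀ u, HasDerivAt m' (m'' u) u)
    (hC : ∀ u, |m'' u| ≤ C)
    (X : Ω → ℝ) (hXmeas : Measurable X) (x : ℝ)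
    (hX1 : Integrable X P) (hmean : ∫ ω, X ω ∂P = x)
    (hX2 : Integrable (fun ω => (X ω) ^ 2) P)
    (hX3 : Integrable (fun ω => |X ω - x| ^ 3) P) :
    |(∫ ω, (m (X ω) - m x) * (X ω - x) ∂P)
        - m' x * ∫ ω, (X ω - x) ^ 2 ∂P|
      ≤ C / 2 * ∫ ω, |X ω - x| ^ 3 ∂P ∧
    (∫ ω, (m (X ω) - m x) * (X ω - x) ∂P)
      = ∫ ω, (m (X ω) - ∫ ω', m (X ω') ∂P) * (X ω - x) ∂P :=
  influence_score_taylor_bound_general P m m' m'' C hd1 hd2 hC X x hX1 hmean hX2 hX3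
end

section
/- Let m : ℝ → ℝ be twice differentiable with bounded second derivative, fix x ∈ ℝ and s > 0, and for each ε > 0 let X_ε be a real-valued random variable with E[X_ε] = x, Var(X_ε) = ε s, and E[|X_ε − x|³] ≤ K ε^{3/2} for a constant K independent of ε. Then lim_{ε → 0⁺} (1/ε) Cov(m(X_ε), X_ε) = s · m'(x). -/
/-!
Write `R u = m u - m x - m'(x) (u - x)` for the first-order Taylor remainder of `m` at `x`;
since `m'` is `C`-Lipschitz, `|R u| ≤ C (u - x)²`. As `X_ε - x` is centred, the covariance
of `m(X_ε)` and `X_ε` equals `m'(x) Var(X_ε) + E[R(X_ε)(X_ε - x)]`, which is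
`ε s m'(x) + O(E|X_ε - x|³) = ε s m'(x) + O(ε^{3/2})`; dividing by `ε` leaves an error of
order `ε^{1/2}`.
-/

open MeasureTheory Real Filter Topology

theorem abs_sub_sub_mul_sub_le_sq {f f' : ℝ → ℝ} {C x : ℝ}
    (hf : ∀ u, HasDerivAt f (f' u) u) (hf' : ∀ u, |f' u - f' x| ≤ C * |u - x|) (u : ℝ) :
    |f u - f x - f' x * (u - x)| ≤ C * (u - x) ^ 2 := by
  have hC : 0 ≤ C := by simpa using (abs_nonneg _).trans (hf' (x + 1))
  have hderiv : ∀ v ∈ Set.uIcc x u,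
      HasDerivWithinAt (fun v => f v - f' x * v) (f' v - f' x) (Set.uIcc x u) v := fun v _ =>
    ((hf v).sub (((hasDerivAt_id' v).const_mul (f' x)).congr_deriv (mul_one _))
      ).hasDerivWithinAt
  have hbound : ∀ v ∈ Set.uIcc x u, ‖f' v - f' x‖ ≤ C * |u - x| := fun v hv =>
    (hf' v).trans (mul_le_mul_of_nonneg_left (Set.abs_sub_left_of_mem_uIcc hv) hC)
  have := Convex.norm_image_sub_le_of_norm_hasDerivWithin_le hderiv hbound (convex_uIcc x u)
    Set.left_mem_uIcc Set.right_mem_uIcc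
  simp only [Real.norm_eq_abs] at this
  calc |f u - f x - f' x * (u - x)| = |f u - f' x * u - (f x - f' x * x)| := by ring_nf
    _ ≤ C * |u - x| * |u - x| := this
    _ = C * (u - x) ^ 2 := by rw [mul_assoc, abs_mul_abs_self, sq]

theorem abs_integral_mul_sub_sub_mul_integral_sq_le {Ω : Type*} [MeasurableSpace Ω]
    {P : Measure Ω} [IsProbabilityMeasure P] {f : ℝ → ℝ} {Y : Ω → ℝ} {x a c C : ℝ}
    (hf : Continuous f) (hR : ∀ u, |f u - f x - a * (u - x)| ≤ C * (u - x) ^ 2)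
    (hY : Integrable Y P) (hmean : ∫ ω, Y ω ∂P = x)
    (h2 : Integrable (fun ω => (Y ω - x) ^ 2) P) (h3 : Integrable (fun ω => |Y ω - x| ^ 3) P) :
    |∫ ω, (f (Y ω) - c) * (Y ω - x) ∂P - a * ∫ ω, (Y ω - x) ^ 2 ∂P|
      ≤ C * ∫ ω, |Y ω - x| ^ 3 ∂P := by
  set R : ℝ → ℝ := fun u => f u - f x - a * (u - x)
  have hRY_le : ∀ ω, |R (Y ω) * (Y ω - x)| ≤ C * |Y ω - x| ^ 3 := fun ω => by
    rw [abs_mul]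
    calc |R (Y ω)| * |Y ω - x| ≤ C * (Y ω - x) ^ 2 * |Y ω - x| :=
          mul_le_mul_of_nonneg_right (hR _) (abs_nonneg _)
      _ = C * |Y ω - x| ^ 3 := by rw [← sq_abs]; ring
  have hYx : Integrable (fun ω => Y ω - x) P := hY.sub (integrable_const x)
  have hR_cont : Continuous R := by fun_prop
  have hRY : Integrable (fun ω => R (Y ω) * (Y ω - x)) P :=
    (h3.const_mul C).mono' ((hR_cont.comp_aestronglyMeasurable hY.1).mul hYx.1)
      (ae_of_all _ hRY_le)
  have hcentered : ∫ ω, (Y ω - x) ∂P = 0 := by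
    simp [integral_sub hY (integrable_const x), hmean]
  have hsplit : ∫ ω, (f (Y ω) - c) * (Y ω - x) ∂P
      = (f x - c) * ∫ ω, (Y ω - x) ∂P + (a * ∫ ω, (Y ω - x) ^ 2 ∂P
        + ∫ ω, R (Y ω) * (Y ω - x) ∂P) := by
    calc ∫ ω, (f (Y ω) - c) * (Y ω - x) ∂P
        = ∫ ω, ((f x - c) * (Y ω - x) + (a * (Y ω - x) ^ 2 + R (Y ω) * (Y ω - x))) ∂P :=
          integral_congr_ae (ae_of_all _ fun ω => by ring)
      _ = _ := by
        have hrest : Integrable (fun ω => a * (Y ω - x) ^ 2 + R (Y ω) * (Y ω - x)) P :=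
          (h2.const_mul a).add hRY
        rw [integral_add (hYx.const_mul _) hrest,
          integral_add (h2.const_mul a) hRY, integral_const_mul, integral_const_mul]
  rw [hsplit, hcentered, mul_zero, zero_add, add_sub_cancel_left, ← integral_const_mul]
  exact (abs_integral_le_integral_abs).trans
    (integral_mono hRY.abs (h3.const_mul C) hRY_le)

theorem tendsto_one_div_mul_nhdsGT_zero_of_abs_sub_le {g : ℝ → ℝ} {L B : ℝ}
    (h : ∀ ε > 0, |g ε - ε * L| ≤ B * ε ^ ((3 : ℝ) / 2)) :
    Tendsto (fun ε => (1 / ε) * g ε) (𝓝[>] 0) (𝓝 L) := by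
  have hrate : Tendsto (fun ε : ℝ => B * ε ^ ((1 : ℝ) / 2)) (𝓝[>] 0) (𝓝 0) := by
    have := ((continuousAt_rpow_const 0 ((1 : ℝ) / 2) (Or.inr (by norm_num))).tendsto.const_mul
      B).mono_left (nhdsWithin_le_nhds (s := Set.Ioi 0))
    simpa using this
  rw [tendsto_iff_norm_sub_tendsto_zero]
  refine squeeze_zero' (Eventually.of_forall fun _ => norm_nonneg _) ?_ hrate
  filter_upwards [self_mem_nhdsWithin] with ε (hε : 0 < ε)
  calc ‖1 / ε * g ε - L‖ = |g ε - ε * L| / ε := by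
        rw [Real.norm_eq_abs, ← abs_of_pos hε, ← abs_div, abs_of_pos hε]; congr 1; field_simp
    _ ≤ B * ε ^ ((3 : ℝ) / 2) / ε := by gcongr; exact h ε hε
    _ = B * ε ^ ((1 : ℝ) / 2) := by
        rw [show (3 : ℝ) / 2 = 1 + 1 / 2 by norm_num, rpow_add hε, rpow_one]; field_simp

theorem influence_score_limit_general
    {Ω : Type*} [MeasurableSpace Ω] (P : Measure Ω) [IsProbabilityMeasure P]
    (m m' m'' : ℝ → ℝ) (C : ℝ)
    (hd1 : ∀ u, HasDerivAt m (m' u) u)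
    (hd2 : ∀ u, HasDerivAt m' (m'' u) u)
    (hC : ∀ u, |m'' u| ≤ C)
    (x s : ℝ) (K : ℝ)
    (X : ℝ → Ω → ℝ)
    (hint : ∀ ε > (0 : ℝ), Integrable (X ε) P)
    (hmean : ∀ ε > (0 : ℝ), ∫ ω, X ε ω ∂P = x)
    (hvar : ∀ ε > (0 : ℝ), Integrable (fun ω => (X ε ω - x) ^ 2) P ∧
      ∫ ω, (X ε ω - x) ^ 2 ∂P = ε * s)
    (hthird : ∀ ε > (0 : ℝ), Integrable (fun ω => |X ε ω - x| ^ 3) P ∧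
      ∫ ω, |X ε ω - x| ^ 3 ∂P ≤ K * ε ^ ((3 : ℝ) / 2)) :
    Tendsto
      (fun ε : ℝ =>
        (1 / ε) * ∫ ω, (m (X ε ω) - ∫ ω', m (X ε ω') ∂P) * (X ε ω - x) ∂P)
      (nhdsWithin 0 (Set.Ioi 0)) (nhds (s * m' x)) := by
  have hC0 : 0 ≤ C := (abs_nonneg _).trans (hC x)
  have hlip : ∀ u, |m' u - m' x| ≤ C * |u - x| := fun u => by
    simpa only [Real.norm_eq_abs] using Convex.norm_image_sub_le_of_norm_hasDerivWithin_le
      (fun v _ => (hd2 v).hasDerivWithinAt) (fun v _ => hC v) convex_univ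
      (Set.mem_univ x) (Set.mem_univ u)
  have hremainder := abs_sub_sub_mul_sub_le_sq hd1 hlip
  have hm : Continuous m := continuous_iff_continuousAt.2 fun u => (hd1 u).continuousAt
  refine tendsto_one_div_mul_nhdsGT_zero_of_abs_sub_le (B := C * K) fun ε hε => ?_
  obtain ⟨hsq, hvar_eq⟩ := hvar ε hε
  obtain ⟨hcube, hcube_le⟩ := hthird ε hε
  calc _ = |∫ ω, (m (X ε ω) - ∫ ω', m (X ε ω') ∂P) * (X ε ω - x) ∂P
        - m' x * ∫ ω, (X ε ω - x) ^ 2 ∂P| := by rw [hvar_eq]; congr 2; ring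
    _ ≤ C * ∫ ω, |X ε ω - x| ^ 3 ∂P :=
        abs_integral_mul_sub_sub_mul_integral_sq_le hm hremainder (hint ε hε) (hmean ε hε)
          hsq hcube
    _ ≤ C * K * ε ^ ((3 : ℝ) / 2) := by
        rw [mul_assoc]; exact mul_le_mul_of_nonneg_left hcube_le hC0

/-- **Influence-score identity.**
Let `m : ℝ → ℝ` be twice differentiable with bounded second derivative, fix `x ∈ ℝ` and `s > 0`,
and for each `ε > 0` let `X ε` be a random variable with mean `x`, variance `ε s`, and third
absolute central moment at most `K ε^{3/2}`. Then
`(1/ε) Cov(m(X ε), X ε) → s · m'(x)` as `ε → 0⁺`. -/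
theorem influence_score_limit
    {Ω : Type*} [MeasurableSpace Ω] (P : Measure Ω) [IsProbabilityMeasure P]
    (m m' m'' : ℝ → ℝ) (C : ℝ)
    (hd1 : ∀ u, HasDerivAt m (m' u) u)
    (hd2 : ∀ u, HasDerivAt m' (m'' u) u)
    (hC : ∀ u, |m'' u| ≤ C)
    (x s : ℝ) (hs : 0 < s) (K : ℝ)
    (X : ℝ → Ω → ℝ)
    (hmeas : ∀ ε > (0 : ℝ), Measurable (X ε))
    (hint : ∀ ε > (0 : ℝ), Integrable (X ε) P)
    (hmean : ∀ ε > (0 : ℝ), ∫ ω, X ε ω ∂P = x)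
    (hvar : ∀ ε > (0 : ℝ), Integrable (fun ω => (X ε ω - x) ^ 2) P ∧
      ∫ ω, (X ε ω - x) ^ 2 ∂P = ε * s)
    (hthird : ∀ ε > (0 : ℝ), Integrable (fun ω => |X ε ω - x| ^ 3) P ∧
      ∫ ω, |X ε ω - x| ^ 3 ∂P ≤ K * ε ^ ((3 : ℝ) / 2)) :
    Tendsto
      (fun ε : ℝ =>
        (1 / ε) * ∫ ω, (m (X ε ω) - ∫ ω', m (X ε ω') ∂P) * (X ε ω - x) ∂P)
      (nhdsWithin 0 (Set.Ioi 0)) (nhds (s * m' x)) :=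
  influence_score_limit_general P m m' m'' C hd1 hd2 hC x s K X hint hmean hvar hthird
end

section
/- Let V_α, H_α be a × a, S, H_x be p × p, V_z, H_z be b × b real matrices, together with rectangular matrices H_{αx}, H_{αz}, H_{xα}, H_{xz}, H_{zα}, H_{zx} of the compatible sizes, forming the 3 × 3 block matrix H with block rows (H_α, H_{αx}, H_{αz}), (H_{xα}, H_x, H_{xz}), (H_{zα}, H_{zx}, H_z). For ε > 0 let V(ε) be the block-diagonal matrix with blocks V_α, εS, V_z, and let Σ(ε) := (I − V(ε)H)^{-1} V(ε) (defined for all sufficiently small ε > 0). Assume I_z − V_z H_z is invertible and A := I_α − V_α H_α − V_α H_{αz}(I_z − V_z H_z)^{-1} V_z H_{zα} is invertible. Then, as ε → 0⁺, (1/ε) times the (α, x) block (the upper-middle a × p block) of Σ(ε) converges to A^{-1} (V_α H_{αx} + V_α H_{αz}(I_z − V_z H_z)^{-1} V_z H_{zx}) S. -/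
/-!
At `ε = 0` the `x`-rows of `1 - V 0 * H` are those of the identity, so `1 - V 0 * H` is a
`2 × 2` block matrix whose lower-right block `[[1, 0], [-Vz Hzx, 1 - Vz Hz]]` is invertible
and whose Schur complement is exactly `A`. Hence `1 - V 0 * H` is invertible and the `(α, x)`
block of its inverse is `A⁻¹ (Vα Hαx + Vα Hαz (1 - Vz Hz)⁻¹ Vz Hzx)`. Since `V ε` is block
diagonal, the `(α, x)` block of `Σ(ε)` is that of `(1 - V ε * H)⁻¹` times `ε S`, and the limit
follows from the continuity of matrix inversion at an invertible matrix.
-/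

open Matrix Filter

namespace Matrix

variable {R : Type*} [CommRing R]

theorem toCols₁_toBlocks₁₂_mul_fromBlocks_zero_zero {k k' l m n : Type*}
    [Fintype l] [Fintype m] [Fintype n]
    (P : Matrix (k ⊕ k') (l ⊕ (m ⊕ n)) R) (D₁ : Matrix l l R) (D₂ : Matrix m m R)
    (D₃ : Matrix n n R) :
    (P * fromBlocks D₁ 0 0 (fromBlocks D₂ 0 0 D₃)).toBlocks₁₂.toCols₁ =
      P.toBlocks₁₂.toCols₁ * D₂ := by
  ext i j
  simp [mul_apply, Fintype.sum_sum_type, toBlocks₁₂, toCols₁]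

theorem continuousAt_inv_of_isUnit_det {𝕜 n : Type*} [NormedField 𝕜] [CompleteSpace 𝕜]
    [Fintype n] [DecidableEq n] {M : Matrix n n 𝕜} (hM : IsUnit M.det) :
    ContinuousAt Inv.inv M :=
  continuousAt_matrix_inv M (by simpa using NormedRing.inverse_continuousAt hM.unit)

variable {m n : Type*} [Fintype m] [Fintype n] [DecidableEq m] [DecidableEq n]

theorem isUnit_det_fromBlocks_of_isUnit_det₂₂ {A : Matrix m m R} {B : Matrix m n R}
    {C : Matrix n m R} {D : Matrix n n R} (hD : IsUnit D.det)
    (hS : IsUnit (A - B * D⁻¹ * C).det) : IsUnit (fromBlocks A B C D).det := by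
  let := D.invertibleOfIsUnitDet hD
  rwa [← isUnit_iff_isUnit_det, isUnit_fromBlocks_iff_of_invertible₂₂, invOf_eq_nonsing_inv,
    isUnit_iff_isUnit_det]

theorem toBlocks₁₂_inv_fromBlocks {A : Matrix m m R} {B : Matrix m n R}
    {C : Matrix n m R} {D : Matrix n n R} (hD : IsUnit D.det)
    (hS : IsUnit (A - B * D⁻¹ * C).det) :
    (fromBlocks A B C D)⁻¹.toBlocks₁₂ = -((A - B * D⁻¹ * C)⁻¹ * B * D⁻¹) := by
  let := D.invertibleOfIsUnitDet hD
  let := (A - B * ⅟D * C).invertibleOfIsUnitDet (by rwa [invOf_eq_nonsing_inv])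
  let := fromBlocks₂₂Invertible A B C D
  rw [← invOf_eq_nonsing_inv, invOf_fromBlocks₂₂_eq, toBlocks_fromBlocks₁₂]
  simp only [invOf_eq_nonsing_inv]

variable {l : Type*}

theorem fromCols_mul_inv_fromBlocks_one_zero (Q₁ : Matrix l m R) (Q₂ : Matrix l n R)
    (C : Matrix n m R) {T : Matrix n n R} (hT : IsUnit T.det) :
    fromCols Q₁ Q₂ * (fromBlocks (1 : Matrix m m R) 0 C T)⁻¹ =
      fromCols (Q₁ - Q₂ * T⁻¹ * C) (Q₂ * T⁻¹) := by
  rw [inv_fromBlocks_zero₁₂_of_isUnit_iff _ _ _ (by simp [isUnit_iff_isUnit_det, hT]),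
    fromCols_mul_fromBlocks, inv_one]
  simp only [Matrix.mul_one, Matrix.mul_zero, zero_add, Matrix.mul_neg, sub_eq_add_neg,
    Matrix.mul_assoc]

theorem sub_fromCols_mul_inv_fromBlocks_one_zero_mul_fromRows_zero (P : Matrix l l R)
    (Q₁ : Matrix l m R) (Q₂ : Matrix l n R) (R₂ : Matrix n l R) (C : Matrix n m R)
    {T : Matrix n n R} (hT : IsUnit T.det) :
    P - fromCols Q₁ Q₂ * (fromBlocks (1 : Matrix m m R) 0 C T)⁻¹ *
        fromRows (0 : Matrix m l R) R₂ = P - Q₂ * T⁻¹ * R₂ := by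
  rw [fromCols_mul_inv_fromBlocks_one_zero Q₁ Q₂ C hT, fromCols_mul_fromRows, Matrix.mul_zero,
    zero_add]

variable [Fintype l] [DecidableEq l]

theorem isUnit_det_fromBlocks_fromBlocks_one {P : Matrix l l R} {Q₁ : Matrix l m R}
    {Q₂ : Matrix l n R} {R₂ : Matrix n l R} {C : Matrix n m R} {T : Matrix n n R}
    (hT : IsUnit T.det) (hS : IsUnit (P - Q₂ * T⁻¹ * R₂).det) :
    IsUnit (fromBlocks P (fromCols Q₁ Q₂) (fromRows (0 : Matrix m l R) R₂)
      (fromBlocks (1 : Matrix m m R) 0 C T)).det :=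
  isUnit_det_fromBlocks_of_isUnit_det₂₂ (by simpa using hT)
    (sub_fromCols_mul_inv_fromBlocks_one_zero_mul_fromRows_zero P Q₁ Q₂ R₂ C hT ▸ hS)

theorem toCols₁_toBlocks₁₂_inv_fromBlocks_fromBlocks_one {P : Matrix l l R}
    {Q₁ : Matrix l m R} {Q₂ : Matrix l n R} {R₂ : Matrix n l R} {C : Matrix n m R}
    {T : Matrix n n R} (hT : IsUnit T.det) (hS : IsUnit (P - Q₂ * T⁻¹ * R₂).det) :
    (fromBlocks P (fromCols Q₁ Q₂) (fromRows (0 : Matrix m l R) R₂)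
        (fromBlocks (1 : Matrix m m R) 0 C T))⁻¹.toBlocks₁₂.toCols₁ =
      (P - Q₂ * T⁻¹ * R₂)⁻¹ * (Q₂ * T⁻¹ * C - Q₁) := by
  have hschur := sub_fromCols_mul_inv_fromBlocks_one_zero_mul_fromRows_zero P Q₁ Q₂ R₂ C hT
  rw [toBlocks₁₂_inv_fromBlocks (by simpa using hT) (hschur ▸ hS), hschur, Matrix.mul_assoc,
    fromCols_mul_inv_fromBlocks_one_zero Q₁ Q₂ C hT, ← Matrix.mul_neg, fromCols_neg,
    mul_fromCols, toCols₁_fromCols, neg_sub]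

variable {Vα Hα : Matrix l l R} {Vz Hz : Matrix n n R} {Hx : Matrix m m R} {Hαx : Matrix l m R}
  {Hαz : Matrix l n R} {Hxα : Matrix m l R} {Hxz : Matrix m n R} {Hzα : Matrix n l R}
  {Hzx : Matrix n m R}

theorem one_sub_fromBlocks_zero_mul :
    1 - fromBlocks Vα 0 0 (fromBlocks 0 0 0 Vz) *
        fromBlocks Hα (fromCols Hαx Hαz) (fromRows Hxα Hzα) (fromBlocks Hx Hxz Hzx Hz) =
      fromBlocks (1 - Vα * Hα) (fromCols (-(Vα * Hαx)) (-(Vα * Hαz)))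
        (fromRows 0 (-(Vz * Hzα))) (fromBlocks 1 0 (-(Vz * Hzx)) (1 - Vz * Hz)) := by
  ext (i | i | i) (j | j | j) <;> simp [mul_apply, Fintype.sum_sum_type, one_apply, sub_eq_add_neg]

theorem isUnit_det_one_sub_fromBlocks_zero_mul (hz : IsUnit (1 - Vz * Hz).det)
    (hA : IsUnit (1 - Vα * Hα - Vα * Hαz * (1 - Vz * Hz)⁻¹ * Vz * Hzα).det) :
    IsUnit (1 - fromBlocks Vα 0 0 (fromBlocks 0 0 0 Vz) *
      fromBlocks Hα (fromCols Hαx Hαz) (fromRows Hxα Hzα) (fromBlocks Hx Hxz Hzx Hz)).det := by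
  rw [one_sub_fromBlocks_zero_mul]
  refine isUnit_det_fromBlocks_fromBlocks_one hz ?_
  simpa only [Matrix.mul_neg, Matrix.neg_mul, neg_neg, Matrix.mul_assoc] using hA

theorem toCols₁_toBlocks₁₂_inv_one_sub_fromBlocks_zero_mul (hz : IsUnit (1 - Vz * Hz).det)
    (hA : IsUnit (1 - Vα * Hα - Vα * Hαz * (1 - Vz * Hz)⁻¹ * Vz * Hzα).det) :
    (1 - fromBlocks Vα 0 0 (fromBlocks 0 0 0 Vz) *
        fromBlocks Hα (fromCols Hαx Hαz) (fromRows Hxα Hzα) (fromBlocks Hx Hxz Hzx Hz)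
      )⁻¹.toBlocks₁₂.toCols₁ =
      (1 - Vα * Hα - Vα * Hαz * (1 - Vz * Hz)⁻¹ * Vz * Hzα)⁻¹ *
        (Vα * Hαx + Vα * Hαz * (1 - Vz * Hz)⁻¹ * Vz * Hzx) := by
  rw [one_sub_fromBlocks_zero_mul, toCols₁_toBlocks₁₂_inv_fromBlocks_fromBlocks_one hz
    (by simpa only [Matrix.mul_neg, Matrix.neg_mul, neg_neg, Matrix.mul_assoc] using hA)]
  simp only [Matrix.mul_neg, Matrix.neg_mul, neg_neg, sub_neg_eq_add, Matrix.mul_assoc, add_comm]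

end Matrix

/-- **LRVB influence-score formula.**
With three blocks `α` (interest, size `a`), `x` (perturbed data, size `p`), `z` (nuisance,
size `b`), let `H` be the full `3 × 3` block Hessian, `V ε` the block-diagonal variational
covariance with blocks `Vα`, `ε S`, `Vz`, and `Σ(ε) := (I − V(ε)H)⁻¹ V(ε)`. If `I_z − Vz Hz`
and `A := I_α − Vα Hα − Vα Hαz (I_z − Vz Hz)⁻¹ Vz Hzα` are invertible, then as `ε → 0⁺`,
`(1/ε)` times the `(α, x)` block of `Σ(ε)` converges to
`A⁻¹ (Vα Hαx + Vα Hαz (I_z − Vz Hz)⁻¹ Vz Hzx) S`. -/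
theorem lrvb_influence_score_limit
    {a p b : ℕ}
    (Vα Hα : Matrix (Fin a) (Fin a) ℝ) (S Hx : Matrix (Fin p) (Fin p) ℝ)
    (Vz Hz : Matrix (Fin b) (Fin b) ℝ)
    (Hαx : Matrix (Fin a) (Fin p) ℝ) (Hαz : Matrix (Fin a) (Fin b) ℝ)
    (Hxα : Matrix (Fin p) (Fin a) ℝ) (Hxz : Matrix (Fin p) (Fin b) ℝ)
    (Hzα : Matrix (Fin b) (Fin a) ℝ) (Hzx : Matrix (Fin b) (Fin p) ℝ)
    (H : Matrix (Fin a ⊕ (Fin p ⊕ Fin b)) (Fin a ⊕ (Fin p ⊕ Fin b)) ℝ)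
    (hH : H = Matrix.fromBlocks Hα (Matrix.fromCols Hαx Hαz)
      (Matrix.fromRows Hxα Hzα) (Matrix.fromBlocks Hx Hxz Hzx Hz))
    (V : ℝ → Matrix (Fin a ⊕ (Fin p ⊕ Fin b)) (Fin a ⊕ (Fin p ⊕ Fin b)) ℝ)
    (hV : ∀ ε, V ε = Matrix.fromBlocks Vα 0 0 (Matrix.fromBlocks (ε • S) 0 0 Vz))
    (Sig : ℝ → Matrix (Fin a ⊕ (Fin p ⊕ Fin b)) (Fin a ⊕ (Fin p ⊕ Fin b)) ℝ)
    (hSig : ∀ ε, Sig ε = (1 - V ε * H)⁻¹ * V ε)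
    (hz : IsUnit (1 - Vz * Hz).det)
    (A : Matrix (Fin a) (Fin a) ℝ)
    (hA : A = 1 - Vα * Hα - Vα * Hαz * (1 - Vz * Hz)⁻¹ * Vz * Hzα)
    (hAu : IsUnit A.det) :
    Tendsto
      (fun ε : ℝ => (1 / ε) •
        Matrix.of (fun (i : Fin a) (j : Fin p) => Sig ε (Sum.inl i) (Sum.inr (Sum.inl j))))
      (nhdsWithin 0 (Set.Ioi 0))
      (nhds (A⁻¹ * (Vα * Hαx + Vα * Hαz * (1 - Vz * Hz)⁻¹ * Vz * Hzx) * S)) := by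
  have hV0 : V 0 = fromBlocks Vα 0 0 (fromBlocks 0 0 0 Vz) := by rw [hV, zero_smul]
  have hcont : ContinuousAt (fun ε => (1 - V ε * H)⁻¹) 0 := by
    have hVc : Continuous V := funext hV ▸ by fun_prop
    refine (continuousAt_inv_of_isUnit_det ?_).comp (f := fun ε => 1 - V ε * H) (by fun_prop)
    rw [hV0, hH]
    exact isUnit_det_one_sub_fromBlocks_zero_mul hz (hA ▸ hAu)
  have hblock0 : ((1 - V 0 * H)⁻¹).toBlocks₁₂.toCols₁ =
      A⁻¹ * (Vα * Hαx + Vα * Hαz * (1 - Vz * Hz)⁻¹ * Vz * Hzx) := by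
    rw [hV0, hH, hA]
    exact toCols₁_toBlocks₁₂_inv_one_sub_fromBlocks_zero_mul hz (hA ▸ hAu)
  have hblock : Continuous fun M : Matrix (Fin a ⊕ (Fin p ⊕ Fin b)) (Fin a ⊕ (Fin p ⊕ Fin b)) ℝ =>
      M.toBlocks₁₂.toCols₁ * S :=
    (continuous_id.matrix_submatrix Sum.inl (Sum.inr ∘ Sum.inl)).matrix_mul continuous_const
  have hlim : Tendsto (fun ε => ((1 - V ε * H)⁻¹).toBlocks₁₂.toCols₁ * S)
      (nhdsWithin 0 (Set.Ioi 0)) (nhds (((1 - V 0 * H)⁻¹).toBlocks₁₂.toCols₁ * S)) :=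
    (hblock.continuousAt.comp hcont).tendsto.mono_left nhdsWithin_le_nhds
  rw [← hblock0]
  refine hlim.congr' (eventually_mem_nhdsWithin.mono fun ε hε => ?_)
  change _ = (1 / ε) • (Sig ε).toBlocks₁₂.toCols₁
  rw [hSig, hV, toCols₁_toBlocks₁₂_mul_fromBlocks_zero_zero, Matrix.mul_smul, smul_smul,
    one_div_mul_cancel (ne_of_gt hε), one_smul]
end
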